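/- Let k be a field and n ≥ 1. Let b_1, …, b_n, c_1, …, c_n and d_{j,i} (for 1 ≤ i < j ≤ n) be natural numbers. In the polynomial ring k[a_{1,1}, a_{1,2}, …, a_{n,1}, a_{n,2}, b, c] define recursively F_1 = a_{1,1}a_{1,2} + (−1)^{1+b_1+c_1} b^{b_1} c^{c_1} and, for 1 ≤ j ≤ n−1, F_{j+1} = a_{j+1,1}a_{j+1,2} + (−1)^{1+b_{j+1}+c_{j+1}} b^{b_{j+1}} c^{c_{j+1}} ∏_{i=1}^{j} F_i^{d_{j+1,i}}. Then each F_i is nonzero, ord(F_1) = min{2, b_1 + c_1}, and for every 2 ≤ i ≤ n, ord(F_i) = min{2, b_i + c_i + Σ_{j=1}^{i−1} d_{i,j} · ord(F_j)}. -/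

import Mathlib

/- The polynomial ring `k[a_{1,1}, a_{1,2}, …, a_{n,1}, a_{n,2}, b, c]` is modelled as
   multivariate polynomials in the variables `Sum.inl (i, false) = a_{i,1}`,
   `Sum.inl (i, true) = a_{i,2}` (for `1 ≤ i ≤ n`), `Sum.inr false = b` and
   `Sum.inr true = c`.

   Proof: `ord P` is the order of `P` viewed as a power series, so it is additive on products
   over a domain. Write `F_{j+1} = a_{j+1,1} a_{j+1,2} + T_{j+1}`. The tail `T_{j+1}` only
   involves `b`, `c` and the `a_{i,·}` with `i ≤ j`, so the two summands have disjoint supports;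
   hence `F_{j+1} ≠ 0` and `ord F_{j+1} = min 2 (ord T_{j+1})`, where `ord T_{j+1}` is read off
   from the product formula. -/

namespace Stmt5

open MvPolynomial

/-- The order of vanishing at the origin of a polynomial: the minimum total degree
of a monomial occurring with nonzero coefficient. -/
noncomputable def ord {σ : Type*} {k : Type*} [CommSemiring k] (P : MvPolynomial σ k) : ℕ :=
  sInf ((fun s : σ →₀ ℕ => s.sum fun _ e => e) '' (P.support : Set (σ →₀ ℕ)))

variable {k : Type*} [Field k]

/-- `F_1 = a_{1,1}a_{1,2} + (−1)^{1+b_1+c_1} b^{b_1} c^{c_1}` and, recursively,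
`F_{j+1} = a_{j+1,1}a_{j+1,2} + (−1)^{1+b_{j+1}+c_{j+1}} b^{b_{j+1}} c^{c_{j+1}}
  ∏_{i=1}^{j} F_i^{d_{j+1,i}}`.
(`F 0` is a junk value, indices are 1-based.) -/
noncomputable def F (k : Type*) [Field k] (b c : ℕ → ℕ) (d : ℕ → ℕ → ℕ) :
    ℕ → MvPolynomial ((ℕ × Bool) ⊕ Bool) k
  | 0 => 1
  | j + 1 =>
      X (Sum.inl (j + 1, false)) * X (Sum.inl (j + 1, true)) +
        (-1 : MvPolynomial ((ℕ × Bool) ⊕ Bool) k) ^ (1 + b (j + 1) + c (j + 1)) *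
          X (Sum.inr false) ^ b (j + 1) * X (Sum.inr true) ^ c (j + 1) *
          ∏ i ∈ (Finset.range j).attach, F k b c d (i.1 + 1) ^ d (j + 1) (i.1 + 1)
  decreasing_by
    have := i.2
    simp only [Finset.mem_range] at this
    omega

section Order

variable {σ R : Type*} [CommSemiring R]

theorem ord_eq_sInf_degree (P : MvPolynomial σ R) :
    ord P = sInf (Finsupp.degree '' (P.support : Set (σ →₀ ℕ))) :=
  rfl

theorem ord_le_degree {P : MvPolynomial σ R} {s : σ →₀ ℕ} (hs : s ∈ P.support) :
    ord P ≤ s.degree :=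
  Nat.sInf_le ⟨s, hs, rfl⟩

theorem exists_mem_support_degree_eq_ord {P : MvPolynomial σ R} (hP : P ≠ 0) :
    ∃ s ∈ P.support, s.degree = ord P :=
  Nat.sInf_mem ((Finset.coe_nonempty.2 (support_nonempty.2 hP)).image _)

theorem coe_ord_eq_order {P : MvPolynomial σ R} (hP : P ≠ 0) :
    (ord P : ℕ∞) = (P : MvPowerSeries σ R).order := by
  refine (MvPowerSeries.order_eq_nat.2 ⟨?_, fun s hs => ?_⟩).symm
  · obtain ⟨s, hs, hdeg⟩ := exists_mem_support_degree_eq_ord hP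
    exact ⟨s, by rwa [coeff_coe, ← mem_support_iff], hdeg⟩
  · rw [coeff_coe, ← notMem_support_iff]
    exact fun hmem => (ord_le_degree hmem).not_gt hs

theorem ord_mul [NoZeroDivisors R] {P Q : MvPolynomial σ R} (hP : P ≠ 0) (hQ : Q ≠ 0) :
    ord (P * Q) = ord P + ord Q := by
  have h := MvPowerSeries.order_mul (P : MvPowerSeries σ R) Q
  rw [← coe_mul, ← coe_ord_eq_order (mul_ne_zero hP hQ), ← coe_ord_eq_order hP,
    ← coe_ord_eq_order hQ] at h
  exact_mod_cast h

theorem ord_monomial {s : σ →₀ ℕ} {a : R} (ha : a ≠ 0) : ord (monomial s a) = s.degree := by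
  classical
  rw [ord_eq_sInf_degree, support_monomial, if_neg ha, Finset.coe_singleton, Set.image_singleton,
    csInf_singleton]

theorem ord_C {a : R} (ha : a ≠ 0) : ord (C a : MvPolynomial σ R) = 0 := by
  rw [← monomial_zero', ord_monomial ha, map_zero]

theorem ord_X [Nontrivial R] (i : σ) : ord (X i : MvPolynomial σ R) = 1 := by
  rw [X, ord_monomial one_ne_zero, Finsupp.degree_single]

theorem ord_prod [Nontrivial R] [NoZeroDivisors R] {ι : Type*} {s : Finset ι}
    {P : ι → MvPolynomial σ R} (hP : ∀ i ∈ s, P i ≠ 0) :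
    ord (∏ i ∈ s, P i) = ∑ i ∈ s, ord (P i) := by
  apply Nat.cast_injective (R := ℕ∞)
  rw [Nat.cast_sum, coe_ord_eq_order (Finset.prod_ne_zero_iff.2 hP),
    Finset.sum_congr rfl fun i hi => coe_ord_eq_order (hP i hi), ← MvPowerSeries.order_prod,
    ← coeToMvPowerSeries.ringHom_apply, map_prod]
  rfl

theorem ord_pow [Nontrivial R] [NoZeroDivisors R] {P : MvPolynomial σ R} (hP : P ≠ 0) (n : ℕ) :
    ord (P ^ n) = n * ord P := by
  simpa using ord_prod (s := Finset.range n) fun _ _ => hP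

theorem support_add_eq_of_disjoint [DecidableEq σ] {P Q : MvPolynomial σ R}
    (h : Disjoint P.support Q.support) : (P + Q).support = P.support ∪ Q.support :=
  Finsupp.support_add_eq h

theorem add_ne_zero_of_disjoint {P Q : MvPolynomial σ R} (hP : P ≠ 0)
    (h : Disjoint P.support Q.support) : P + Q ≠ 0 := by
  classical
  refine support_nonempty.1 ?_
  rw [support_add_eq_of_disjoint h]
  exact (support_nonempty.2 hP).mono Finset.subset_union_left

theorem ord_add_of_disjoint {P Q : MvPolynomial σ R} (hP : P ≠ 0) (hQ : Q ≠ 0)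
    (h : Disjoint P.support Q.support) : ord (P + Q) = min (ord P) (ord Q) := by
  classical
  rw [ord_eq_sInf_degree, support_add_eq_of_disjoint h, Finset.coe_union, Set.image_union,
    csInf_union (OrderBot.bddBelow _) ((Finset.coe_nonempty.2 (support_nonempty.2 hP)).image _)
      (OrderBot.bddBelow _) ((Finset.coe_nonempty.2 (support_nonempty.2 hQ)).image _)]
  rfl

theorem eq_zero_of_mem_support_of_mem_supported {P : MvPolynomial σ R} {S : Set σ}
    {s : σ →₀ ℕ} {v : σ} (hP : P ∈ supported R S) (hs : s ∈ P.support) (hv : v ∉ S) :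
    s v = 0 := by
  by_contra hsv
  exact hv (mem_supported.1 hP
    ((mem_vars_iff_mem_support v).2 ⟨s, hs, Finsupp.mem_support_iff.2 hsv⟩))

end Order

-- `FTail k b c d j` is the tail `T_{j+1}` of `F_{j+1}`.
variable (k) in
noncomputable def FTail (b c : ℕ → ℕ) (d : ℕ → ℕ → ℕ) (j : ℕ) :
    MvPolynomial ((ℕ × Bool) ⊕ Bool) k :=
  (-1 : MvPolynomial ((ℕ × Bool) ⊕ Bool) k) ^ (1 + b (j + 1) + c (j + 1)) *
    X (Sum.inr false) ^ b (j + 1) * X (Sum.inr true) ^ c (j + 1) *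
    ∏ i ∈ Finset.range j, F k b c d (i + 1) ^ d (j + 1) (i + 1)

theorem F_succ (b c : ℕ → ℕ) (d : ℕ → ℕ → ℕ) (j : ℕ) :
    F k b c d (j + 1) =
      X (Sum.inl (j + 1, false)) * X (Sum.inl (j + 1, true)) + FTail k b c d j := by
  rw [F, FTail, Finset.prod_attach (Finset.range j) fun i => F k b c d (i + 1) ^ d (j + 1) (i + 1)]

def varsUpTo (i : ℕ) : Set ((ℕ × Bool) ⊕ Bool) :=
  {v | ∀ p, v = Sum.inl p → p.1 ≤ i}

theorem varsUpTo_mono {i j : ℕ} (hij : i ≤ j) : varsUpTo i ⊆ varsUpTo j :=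
  fun _ hv p hp => (hv p hp).trans hij

theorem FTail_mem_supported {b c : ℕ → ℕ} {d : ℕ → ℕ → ℕ} {j : ℕ}
    (hF : ∀ i < j, F k b c d (i + 1) ∈ supported k (varsUpTo (i + 1))) :
    FTail k b c d j ∈ supported k (varsUpTo j) := by
  have hX : ∀ t, (X (Sum.inr t) : MvPolynomial _ k) ∈ supported k (varsUpTo j) := fun t =>
    X_mem_supported.2 fun p hp => absurd hp Sum.inr_ne_inl
  refine mul_mem (mul_mem (mul_mem (pow_mem (neg_mem (one_mem _)) _) (pow_mem (hX _) _))
    (pow_mem (hX _) _)) (prod_mem fun i hi => pow_mem ?_ _)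
  exact supported_mono (varsUpTo_mono (Finset.mem_range.1 hi)) (hF i (Finset.mem_range.1 hi))

theorem F_mem_supported (b c : ℕ → ℕ) (d : ℕ → ℕ → ℕ) (i : ℕ) :
    F k b c d i ∈ supported k (varsUpTo i) := by
  induction i using Nat.strong_induction_on with
  | _ i ih =>
    cases i with
    | zero => rw [F]; exact one_mem _
    | succ j =>
      rw [F_succ]
      refine add_mem (mul_mem ?_ ?_) (supported_mono (varsUpTo_mono j.le_succ)
        (FTail_mem_supported fun i hi => ih (i + 1) (by omega)))
      all_goals exact X_mem_supported.2 fun p hp => (Sum.inl_injective hp).symm ▸ le_rfl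

theorem disjoint_support_FTail (b c : ℕ → ℕ) (d : ℕ → ℕ → ℕ) (j : ℕ) :
    Disjoint (X (Sum.inl (j + 1, false)) * X (Sum.inl (j + 1, true)) :
      MvPolynomial ((ℕ × Bool) ⊕ Bool) k).support (FTail k b c d j).support := by
  classical
  rw [X, X, monomial_mul, one_mul, support_monomial, if_neg one_ne_zero,
    Finset.disjoint_singleton_left]
  intro hs
  have := eq_zero_of_mem_support_of_mem_supported (v := Sum.inl (j + 1, false))
    (FTail_mem_supported fun i _ => F_mem_supported b c d (i + 1)) hs
    fun hv => absurd (hv _ rfl) (by omega)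
  simp at this

theorem F_ne_zero (b c : ℕ → ℕ) (d : ℕ → ℕ → ℕ) (i : ℕ) : F k b c d i ≠ 0 := by
  cases i with
  | zero => rw [F]; exact one_ne_zero
  | succ j =>
    rw [F_succ]
    exact add_ne_zero_of_disjoint (mul_ne_zero (X_ne_zero _) (X_ne_zero _))
      (disjoint_support_FTail b c d j)

theorem FTail_ne_zero (b c : ℕ → ℕ) (d : ℕ → ℕ → ℕ) (j : ℕ) : FTail k b c d j ≠ 0 := by
  exact mul_ne_zero (mul_ne_zero (mul_ne_zero (pow_ne_zero _ (neg_ne_zero.2 one_ne_zero))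
    (pow_ne_zero _ (X_ne_zero _))) (pow_ne_zero _ (X_ne_zero _)))
    (Finset.prod_ne_zero_iff.2 fun i _ => pow_ne_zero _ (F_ne_zero b c d (i + 1)))

theorem ord_FTail (b c : ℕ → ℕ) (d : ℕ → ℕ → ℕ) (j : ℕ) :
    ord (FTail k b c d j) = b (j + 1) + c (j + 1) +
      ∑ i ∈ Finset.range j, d (j + 1) (i + 1) * ord (F k b c d (i + 1)) := by
  have hsign : (-1 : MvPolynomial ((ℕ × Bool) ⊕ Bool) k) ^ (1 + b (j + 1) + c (j + 1)) =
      C ((-1) ^ (1 + b (j + 1) + c (j + 1))) := by simp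
  rw [FTail, hsign, ord_mul, ord_mul, ord_mul, ord_C, ord_pow, ord_pow, ord_X, ord_X, ord_prod]
  · simp only [ord_pow (F_ne_zero b c d _)]
    ring
  all_goals simp [Finset.prod_ne_zero_iff, F_ne_zero]

theorem ord_F_succ (b c : ℕ → ℕ) (d : ℕ → ℕ → ℕ) (j : ℕ) :
    ord (F k b c d (j + 1)) = min 2 (b (j + 1) + c (j + 1) +
      ∑ i ∈ Finset.Icc 1 j, d (j + 1) i * ord (F k b c d i)) := by
  rw [F_succ, ord_add_of_disjoint (mul_ne_zero (X_ne_zero _) (X_ne_zero _)) (FTail_ne_zero b c d j)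
    (disjoint_support_FTail b c d j), ord_mul (X_ne_zero _) (X_ne_zero _), ord_X, ord_X,
    ord_FTail, ← Finset.Ico_add_one_right_eq_Icc, Finset.sum_Ico_eq_sum_range, Nat.add_sub_cancel]
  simp only [add_comm 1]

theorem ord_F_general (n : ℕ) (b c : ℕ → ℕ) (d : ℕ → ℕ → ℕ) :
    (∀ i, 1 ≤ i → i ≤ n → F k b c d i ≠ 0) ∧
    ord (F k b c d 1) = min 2 (b 1 + c 1) ∧
    ∀ i, 2 ≤ i → i ≤ n →
      ord (F k b c d i) =
        min 2 (b i + c i + ∑ j ∈ Finset.Icc 1 (i - 1), d i j * ord (F k b c d j)) := by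
  refine ⟨fun i _ _ => F_ne_zero b c d i, by simpa using ord_F_succ (k := k) b c d 0,
    fun i hi _ => ?_⟩
  obtain ⟨j, rfl⟩ : ∃ j, i = j + 1 := ⟨i - 1, by omega⟩
  exact ord_F_succ b c d j

theorem ord_F (n : ℕ) (hn : 1 ≤ n) (b c : ℕ → ℕ) (d : ℕ → ℕ → ℕ) :
    (∀ i, 1 ≤ i → i ≤ n → F k b c d i ≠ 0) ∧
    ord (F k b c d 1) = min 2 (b 1 + c 1) ∧
    ∀ i, 2 ≤ i → i ≤ n →
      ord (F k b c d i) =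
        min 2 (b i + c i + ∑ j ∈ Finset.Icc 1 (i - 1), d i j * ord (F k b c d j)) :=
  ord_F_general n b c d

end Stmt5
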